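/- Let m, n ≥ 1, let γ, τ > 0, δ ∈ (0, 1], and η := √(τ+γ) with η ≤ 1. Let A be a random matrix over F₂^{m×n} and let B be a bad-set assignment for A. Let S be any value attained by B(A) with positive probability (so S is either a subset of {1, …, m} of size at most η·m, or the symbol ⊥), and set ε_bad(S) := Pr[A is (τ,δ)-bad with respect to B | B(A) = S]. Then the conditional distribution of A given B(A) = S is ε_bad(S)-close to an (η, n·(1−η) − log₂(1/δ))-block source. -/

import Mathlib

/-!
Let `σ` be `μ` restricted to `{B = S₀}` and `S` the row set named by `S₀`. Sample a matrix row by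
row: row `i` follows the conditional law of `σ` given the earlier rows when that prefix has
positive `σ`-mass and, for `i ∉ S`, every value of the row has conditional probability at most
`t = 2^{-n'}`, where `n' = n(1-η) - log₂(1/δ)`; otherwise it is uniform, which is `t`-flat as
well because `n' ≤ n`. The resulting law `ν` is an `(η, n')`-block source by construction.

If `A₀` with `B A₀ = S₀` is not `(τ,δ)`-bad, every row is safe along `A₀`: conditioning on
`B = S₀` keeps at least a fraction `δ` of the mass of each prefix, and a matrix `D` in the support
of `σ` realising a given row value is not `τ`-rare, so `p_i(D) ≤ 2^{-(1-η)n}` for `i ∉ S`. By the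
chain rule `ν` then agrees with the conditional law at `A₀`. Hence the conditional law exceeds `ν`
only on bad matrices, and the statistical distance is at most their conditional mass.
-/

open Finset

open Classical in
/-- Probability of an event for a random matrix over `F₂` with mass function `μ`. -/
noncomputable def prEvt {m n : ℕ} (μ : Matrix (Fin m) (Fin n) (ZMod 2) → ℝ)
    (E : Matrix (Fin m) (Fin n) (ZMod 2) → Prop) : ℝ :=
  ∑ A, if E A then μ A else 0

/-- `rowsAgree i A B` says that the first `i` rows of `A` and `B` coincide. -/
def rowsAgree {m n : ℕ} (i : ℕ) (A B : Matrix (Fin m) (Fin n) (ZMod 2)) : Prop :=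
  ∀ j : Fin m, (j : ℕ) < i → A j = B j

/-- `pIdx μ i A₀` is the conditional probability that row `i` of a `μ`-random matrix equals
row `i` of `A₀`, given that the previous rows agree with those of `A₀`. -/
noncomputable def pIdx {m n : ℕ} (μ : Matrix (Fin m) (Fin n) (ZMod 2) → ℝ)
    (i : Fin m) (A₀ : Matrix (Fin m) (Fin n) (ZMod 2)) : ℝ :=
  prEvt μ (fun B => B i = A₀ i ∧ rowsAgree (i : ℕ) B A₀)
    / prEvt μ (fun B => rowsAgree (i : ℕ) B A₀)

/-- `qIdx μ i A₀ = -log₂ (pIdx μ i A₀)`. -/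
noncomputable def qIdx {m n : ℕ} (μ : Matrix (Fin m) (Fin n) (ZMod 2) → ℝ)
    (i : Fin m) (A₀ : Matrix (Fin m) (Fin n) (ZMod 2)) : ℝ :=
  -Real.logb 2 (pIdx μ i A₀)

/-- `A₀` is `τ`-rare if some conditional row probability is below `2 ^ (-n (1 + τ))`. -/
def tauRare {m n : ℕ} (μ : Matrix (Fin m) (Fin n) (ZMod 2) → ℝ) (τ : ℝ)
    (A₀ : Matrix (Fin m) (Fin n) (ZMod 2)) : Prop :=
  ∃ i : Fin m, pIdx μ i A₀ < (2 : ℝ) ^ (-((n : ℝ) * (1 + τ)))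

/-- A bad-set assignment for the random matrix distributed according to `μ`: every `τ`-rare
matrix in the support is mapped to `⊥` (here `none`) and every non-`τ`-rare matrix in the
support is mapped to a set of at most `√(τ+γ)·m` rows outside of which the conditional
surprise `qᵢ` is at least `(1 - √(τ+γ))·n`. -/
def IsBadSetAssignment {m n : ℕ} (μ : Matrix (Fin m) (Fin n) (ZMod 2) → ℝ) (τ γ : ℝ)
    (B : Matrix (Fin m) (Fin n) (ZMod 2) → Option (Finset (Fin m))) : Prop :=
  ∀ A₀, 0 < μ A₀ →
    (tauRare μ τ A₀ → B A₀ = none) ∧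
    (¬ tauRare μ τ A₀ → ∃ S : Finset (Fin m), B A₀ = some S ∧
      (S.card : ℝ) ≤ Real.sqrt (τ + γ) * (m : ℝ) ∧
      ∀ i : Fin m, i ∉ S → (1 - Real.sqrt (τ + γ)) * (n : ℝ) ≤ qIdx μ i A₀)

/-- `A₀` is `(τ,δ)`-bad with respect to the bad-set assignment `B`: either `A₀` is `τ`-rare,
or for some `i` the conditional probability that `B` of the random matrix equals `B A₀`, given
that the first `i` rows agree with `A₀`, is below `δ`. -/
def IsTauDeltaBad {m n : ℕ} (μ : Matrix (Fin m) (Fin n) (ZMod 2) → ℝ) (τ δ : ℝ)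
    (B : Matrix (Fin m) (Fin n) (ZMod 2) → Option (Finset (Fin m)))
    (A₀ : Matrix (Fin m) (Fin n) (ZMod 2)) : Prop :=
  tauRare μ τ A₀ ∨ ∃ i : Fin m,
    prEvt μ (fun C => B C = B A₀ ∧ rowsAgree (i : ℕ) C A₀)
      / prEvt μ (fun C => rowsAgree (i : ℕ) C A₀) < δ

/-- `ν` (a distribution on `F₂^{m×n}`) is an `(η, n')`-block source: there is a set `S` of at
most `η·m` rows such that for every matrix in the support and every row `i ∉ S`, every value of
row `i` has conditional probability at most `2^{-n'}` given the previous rows. -/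
def IsBlockSource {m n : ℕ} (ν : Matrix (Fin m) (Fin n) (ZMod 2) → ℝ) (η n' : ℝ) : Prop :=
  ∃ S : Finset (Fin m), (S.card : ℝ) ≤ η * (m : ℝ) ∧
    ∀ A₀, 0 < ν A₀ → ∀ i : Fin m, i ∉ S → ∀ w : Fin n → ZMod 2,
      prEvt ν (fun C => C i = w ∧ rowsAgree (i : ℕ) C A₀)
        / prEvt ν (fun C => rowsAgree (i : ℕ) C A₀) ≤ (2 : ℝ) ^ (-n')

open Classical in
/-- The conditional distribution of the `μ`-random matrix given `B(A) = S₀`. -/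
noncomputable def condDist {m n : ℕ} (μ : Matrix (Fin m) (Fin n) (ZMod 2) → ℝ)
    (B : Matrix (Fin m) (Fin n) (ZMod 2) → Option (Finset (Fin m)))
    (S₀ : Option (Finset (Fin m))) (A : Matrix (Fin m) (Fin n) (ZMod 2)) : ℝ :=
  (if B A = S₀ then μ A else 0) / prEvt μ (fun A' => B A' = S₀)

section

variable {m n : ℕ}

local notation "Mx" => Matrix (Fin m) (Fin n) (ZMod 2)

theorem two_rpow_neg_sub_logb (x : ℝ) {δ : ℝ} (hδ : 0 < δ) :
    (2 : ℝ) ^ (-(x - Real.logb 2 (1 / δ))) = 2 ^ (-x) / δ := by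
  rw [neg_sub, sub_eq_add_neg, Real.rpow_add two_pos, Real.rpow_logb two_pos (by norm_num)
    (by positivity)]
  ring

theorem prEvt_congr (μ : Mx → ℝ) {E F : Mx → Prop} (h : ∀ A, E A ↔ F A) :
    prEvt μ E = prEvt μ F :=
  congrArg (prEvt μ) (funext fun A => propext (h A))

open Classical in
theorem prEvt_nonneg {μ : Mx → ℝ} (hμ : ∀ A, 0 ≤ μ A) (E : Mx → Prop) : 0 ≤ prEvt μ E :=
  sum_nonneg fun A _ => ite_nonneg (hμ A) le_rfl

open Classical in
theorem prEvt_mono {μ : Mx → ℝ} (hμ : ∀ A, 0 ≤ μ A) {E F : Mx → Prop} (h : ∀ A, E A → F A) :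
    prEvt μ E ≤ prEvt μ F := by
  refine sum_le_sum fun A _ => ?_
  by_cases hE : E A
  · rw [if_pos hE, if_pos (h A hE)]
  · rw [if_neg hE]
    exact ite_nonneg (hμ A) le_rfl

open Classical in
theorem single_le_prEvt {μ : Mx → ℝ} (hμ : ∀ A, 0 ≤ μ A) {E : Mx → Prop} {A₀ : Mx}
    (hE : E A₀) : μ A₀ ≤ prEvt μ E := by
  have := single_le_sum (f := fun A => if E A then μ A else 0)
    (fun A _ => ite_nonneg (hμ A) le_rfl) (mem_univ A₀)
  rwa [if_pos hE] at this

open Classical in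
theorem exists_pos_of_prEvt_pos {μ : Mx → ℝ} {E : Mx → Prop} (h : 0 < prEvt μ E) :
    ∃ A, E A ∧ 0 < μ A := by
  by_contra! hcon
  exact h.not_ge (sum_nonpos fun A _ => by split_ifs with hE; exacts [hcon A hE, le_rfl])

open Classical in
theorem prEvt_div_const (μ : Mx → ℝ) (c : ℝ) (E : Mx → Prop) :
    prEvt (fun A => μ A / c) E = prEvt μ E / c := by
  rw [prEvt, prEvt, sum_div]
  exact sum_congr rfl fun A _ => by split_ifs <;> simp

theorem prEvt_sum_row (μ : Mx → ℝ) (i : Fin m) (R : Mx → Prop) :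
    ∑ w : Fin n → ZMod 2, prEvt μ (fun C => C i = w ∧ R C) = prEvt μ R := by
  classical
  unfold prEvt
  rw [sum_comm]
  refine sum_congr rfl fun C _ => ?_
  by_cases hR : R C <;> simp [hR]

theorem rowsAgree_zero (A B : Mx) : rowsAgree 0 A B := fun _ hj => absurd hj (Nat.not_lt_zero _)

theorem rowsAgree_top_iff {A B : Mx} : rowsAgree m A B ↔ A = B :=
  ⟨fun h => funext fun j => h j j.isLt, fun h j _ => by rw [h]⟩

theorem rowsAgree_congr_right {k : ℕ} {D A₀ : Mx} (h : rowsAgree k D A₀) (C : Mx) :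
    rowsAgree k C D ↔ rowsAgree k C A₀ :=
  ⟨fun hc j hj => (hc j hj).trans (h j hj), fun hc j hj => (hc j hj).trans (h j hj).symm⟩

theorem rowsAgree_updateRow_of_le {k : ℕ} {i : Fin m} (hk : k ≤ i) (w : Fin n → ZMod 2)
    (A₀ : Mx) : rowsAgree k (A₀.updateRow i w) A₀ :=
  fun _ hj => Matrix.updateRow_ne (Fin.ne_of_lt (hj.trans_le hk))

theorem rowsAgree_succ_updateRow (i : Fin m) (w : Fin n → ZMod 2) (C A₀ : Mx) :
    (C i = w ∧ rowsAgree i C A₀) ↔ rowsAgree (i + 1) C (A₀.updateRow i w) := by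
  constructor
  · rintro ⟨rfl, hC⟩ j hj
    rcases (Nat.lt_succ_iff_lt_or_eq.1 hj) with hj | hj
    · rw [Matrix.updateRow_ne (Fin.ne_of_lt hj)]
      exact hC j hj
    · rw [Fin.ext hj, Matrix.updateRow_self]
  · intro h
    refine ⟨(h i (lt_add_one _)).trans Matrix.updateRow_self, fun j hj => ?_⟩
    rw [h j (Nat.lt_succ_of_lt hj), Matrix.updateRow_ne (Fin.ne_of_lt hj)]

theorem rowsAgree_succ (i : Fin m) (C A₀ : Mx) :
    (C i = A₀ i ∧ rowsAgree i C A₀) ↔ rowsAgree (i + 1) C A₀ := by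
  simpa only [Matrix.updateRow_eq_self] using rowsAgree_succ_updateRow i (A₀ i) C A₀

theorem prEvt_rowsAgree_zero (μ : Mx → ℝ) (A₀ : Mx) :
    prEvt μ (fun C => rowsAgree 0 C A₀) = ∑ A, μ A :=
  sum_congr rfl fun C _ => if_pos (rowsAgree_zero C A₀)

theorem prEvt_rowsAgree_top (μ : Mx → ℝ) (A₀ : Mx) :
    prEvt μ (fun C => rowsAgree m C A₀) = μ A₀ := by
  rw [prEvt_congr μ fun C => rowsAgree_top_iff, prEvt]
  exact (Fintype.sum_eq_single A₀ fun C hC => if_neg hC).trans (if_pos rfl)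

theorem prEvt_rowsAgree_pos {μ : Mx → ℝ} (hμ : ∀ A, 0 ≤ μ A) {A₀ : Mx} (hA₀ : 0 < μ A₀)
    (k : ℕ) : 0 < prEvt μ (fun C => rowsAgree k C A₀) :=
  hA₀.trans_le (single_le_prEvt hμ fun _ _ => rfl)

open Classical in
noncomputable def restrictMass (μ : Mx → ℝ) (E : Mx → Prop) (A : Mx) : ℝ :=
  if E A then μ A else 0

open Classical in
theorem restrictMass_nonneg {μ : Mx → ℝ} (hμ : ∀ A, 0 ≤ μ A) (E : Mx → Prop) (A : Mx) :
    0 ≤ restrictMass μ E A :=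
  ite_nonneg (hμ A) le_rfl

theorem restrictMass_pos_iff {μ : Mx → ℝ} {E : Mx → Prop} {A : Mx} :
    0 < restrictMass μ E A ↔ E A ∧ 0 < μ A := by
  unfold restrictMass
  split_ifs with hE <;> simp [hE]

theorem sum_restrictMass (μ : Mx → ℝ) (E : Mx → Prop) : ∑ A, restrictMass μ E A = prEvt μ E :=
  rfl

open Classical in
theorem prEvt_restrictMass (μ : Mx → ℝ) (E F : Mx → Prop) :
    prEvt (restrictMass μ E) F = prEvt μ (fun A => E A ∧ F A) := by
  refine sum_congr rfl fun A _ => ?_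
  by_cases hE : E A <;> by_cases hF : F A <;> simp [restrictMass, hE, hF]

theorem condDist_eq_restrictMass_div (μ : Mx → ℝ) (B : Mx → Option (Finset (Fin m)))
    (S₀ : Option (Finset (Fin m))) :
    condDist μ B S₀
      = fun A => restrictMass μ (fun A => B A = S₀) A / prEvt μ (fun A => B A = S₀) := by
  ext A
  unfold condDist restrictMass
  congr

theorem condDist_nonneg {μ : Mx → ℝ} (hμ : ∀ A, 0 ≤ μ A) (B : Mx → Option (Finset (Fin m)))
    (S₀ : Option (Finset (Fin m))) (A : Mx) : 0 ≤ condDist μ B S₀ A := by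
  rw [condDist_eq_restrictMass_div]
  exact div_nonneg (restrictMass_nonneg hμ _ A) (prEvt_nonneg hμ _)

theorem sum_condDist (μ : Mx → ℝ) {B : Mx → Option (Finset (Fin m))} {S₀ : Option (Finset (Fin m))}
    (hS₀ : prEvt μ (fun A => B A = S₀) ≠ 0) : ∑ A, condDist μ B S₀ A = 1 := by
  rw [condDist_eq_restrictMass_div, ← sum_div, sum_restrictMass, div_self hS₀]

theorem prEvt_condDist (μ : Mx → ℝ) (B : Mx → Option (Finset (Fin m)))
    (S₀ : Option (Finset (Fin m))) (E : Mx → Prop) :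
    prEvt (condDist μ B S₀) E
      = prEvt μ (fun A => E A ∧ B A = S₀) / prEvt μ (fun A => B A = S₀) := by
  rw [condDist_eq_restrictMass_div, prEvt_div_const, prEvt_restrictMass,
    prEvt_congr μ fun A => and_comm]

noncomputable def rowCond (μ : Mx → ℝ) (i : Fin m) (A₀ : Mx) (w : Fin n → ZMod 2) : ℝ :=
  prEvt μ (fun C => C i = w ∧ rowsAgree i C A₀) / prEvt μ (fun C => rowsAgree i C A₀)

theorem pIdx_eq_rowCond (μ : Mx → ℝ) (i : Fin m) (A : Mx) : pIdx μ i A = rowCond μ i A (A i) :=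
  rfl

theorem rowCond_nonneg {μ : Mx → ℝ} (hμ : ∀ A, 0 ≤ μ A) (i : Fin m) (A₀ : Mx)
    (w : Fin n → ZMod 2) : 0 ≤ rowCond μ i A₀ w :=
  div_nonneg (prEvt_nonneg hμ _) (prEvt_nonneg hμ _)

theorem rowCond_congr (μ : Mx → ℝ) {i : Fin m} {A A' : Mx} (h : rowsAgree i A A') :
    rowCond μ i A = rowCond μ i A' := by
  funext w
  simp only [rowCond, rowsAgree_congr_right h]

theorem sum_rowCond (μ : Mx → ℝ) {i : Fin m} {A₀ : Mx}
    (h : prEvt μ (fun C => rowsAgree i C A₀) ≠ 0) : ∑ w, rowCond μ i A₀ w = 1 := by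
  simp only [rowCond]
  rw [← sum_div, prEvt_sum_row, div_self h]

theorem prod_rowCond_self {μ : Mx → ℝ} (hμ : ∀ A, 0 ≤ μ A) {A₀ : Mx} (hA₀ : 0 < μ A₀) :
    ∏ i, rowCond μ i A₀ (A₀ i) = μ A₀ / ∑ A, μ A := by
  let g : ℕ → ℝˣ := fun k => Units.mk0 (prEvt μ (fun C => rowsAgree k C A₀))
    (prEvt_rowsAgree_pos hμ hA₀ k).ne'
  have hstep : ∀ i : Fin m, rowCond μ i A₀ (A₀ i) = ((g (i + 1) / g i : ℝˣ) : ℝ) := fun i => by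
    simp only [rowCond, prEvt_congr μ (rowsAgree_succ i · A₀), g, Units.val_div_eq_div_val,
      Units.val_mk0]
  rw [prod_congr rfl fun i _ => hstep i, ← Units.coe_prod,
    Fin.prod_univ_eq_prod_range (fun k => g (k + 1) / g k), prod_range_div,
    Units.val_div_eq_div_val]
  simp only [g, Units.val_mk0, prEvt_rowsAgree_top, prEvt_rowsAgree_zero]

/-- The law that draws row `i` from `κ i A` given the earlier rows of `A` (provided `κ i A`
depends on those rows only and is normalised). -/
def chainProd (κ : Fin m → Mx → (Fin n → ZMod 2) → ℝ) (A : Mx) : ℝ :=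
  ∏ i, κ i A (A i)

variable {κ : Fin m → Matrix (Fin m) (Fin n) (ZMod 2) → (Fin n → ZMod 2) → ℝ}

theorem chainProd_nonneg (hκ : ∀ i A w, 0 ≤ κ i A w) (A : Mx) : 0 ≤ chainProd κ A :=
  prod_nonneg fun i _ => hκ i A (A i)

theorem prod_lt_succ_updateRow (hdep : ∀ (i : Fin m) A A', rowsAgree i A A' → κ i A = κ i A')
    (i : Fin m) (w : Fin n → ZMod 2) (A₀ : Mx) :
    ∏ j : Fin m with j.val < i.val + 1, κ j (A₀.updateRow i w) (A₀.updateRow i w j)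
      = (∏ j : Fin m with j.val < i.val, κ j A₀ (A₀ j)) * κ i A₀ w := by
  have hsplit : univ.filter (fun j : Fin m => j.val < i.val + 1)
      = insert i (univ.filter fun j : Fin m => j.val < i.val) := by
    ext j
    simp only [mem_filter, mem_univ, true_and, mem_insert, Fin.ext_iff]
    omega
  rw [hsplit, prod_insert (by simp), mul_comm, Matrix.updateRow_self,
    hdep i _ _ (rowsAgree_updateRow_of_le le_rfl w A₀)]
  congr 1
  refine prod_congr rfl fun j hj => ?_
  have hji : (j : ℕ) < i := (mem_filter.1 hj).2
  rw [Matrix.updateRow_ne (Fin.ne_of_lt hji), hdep j _ _ (rowsAgree_updateRow_of_le hji.le w A₀)]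

theorem prEvt_chainProd_rowsAgree (hκ1 : ∀ i A, ∑ w, κ i A w = 1)
    (hdep : ∀ (i : Fin m) A A', rowsAgree i A A' → κ i A = κ i A') {k : ℕ} (hk : k ≤ m) (A₀ : Mx) :
    prEvt (chainProd κ) (fun C => rowsAgree k C A₀)
      = ∏ j : Fin m with j.val < k, κ j A₀ (A₀ j) := by
  induction hk using Nat.decreasingInduction generalizing A₀ with
  | self =>
    rw [prEvt_rowsAgree_top]
    simp [chainProd]
  | of_succ k hk ih =>
    let K : Fin m := ⟨k, hk⟩
    calc prEvt (chainProd κ) (fun C => rowsAgree k C A₀)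
        = ∑ w, prEvt (chainProd κ) (fun C => rowsAgree (K + 1) C (A₀.updateRow K w)) := by
          rw [← prEvt_sum_row _ K]
          exact sum_congr rfl fun w _ => prEvt_congr _ (rowsAgree_succ_updateRow K w · A₀)
      _ = ∑ w, (∏ j : Fin m with j.val < k, κ j A₀ (A₀ j)) * κ K A₀ w :=
          sum_congr rfl fun w _ => (ih _).trans (prod_lt_succ_updateRow hdep K w A₀)
      _ = ∏ j : Fin m with j.val < k, κ j A₀ (A₀ j) := by rw [← mul_sum, hκ1, mul_one]

theorem sum_chainProd (hκ1 : ∀ i A, ∑ w, κ i A w = 1)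
    (hdep : ∀ (i : Fin m) A A', rowsAgree i A A' → κ i A = κ i A') : ∑ A, chainProd κ A = 1 := by
  rw [← prEvt_rowsAgree_zero _ 0, prEvt_chainProd_rowsAgree hκ1 hdep (Nat.zero_le m)]
  simp

theorem rowCond_chainProd (hκ1 : ∀ i A, ∑ w, κ i A w = 1)
    (hdep : ∀ (i : Fin m) A A', rowsAgree i A A' → κ i A = κ i A') {A₀ : Mx}
    (hA₀ : chainProd κ A₀ ≠ 0) (i : Fin m) (w : Fin n → ZMod 2) :
    rowCond (chainProd κ) i A₀ w = κ i A₀ w := by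
  have hprefix : ∏ j : Fin m with j.val < i.val, κ j A₀ (A₀ j) ≠ 0 :=
    prod_ne_zero_iff.2 fun j _ => prod_ne_zero_iff.1 hA₀ j (mem_univ j)
  rw [rowCond, prEvt_congr _ (rowsAgree_succ_updateRow i w · A₀),
    prEvt_chainProd_rowsAgree hκ1 hdep i.isLt, prod_lt_succ_updateRow hdep,
    prEvt_chainProd_rowsAgree hκ1 hdep i.isLt.le, mul_div_cancel_left₀ _ hprefix]

def IsSafeRow (σ : Mx → ℝ) (S : Finset (Fin m)) (t : ℝ) (i : Fin m) (A₀ : Mx) : Prop :=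
  0 < prEvt σ (fun C => rowsAgree i C A₀) ∧ (i ∈ S ∨ ∀ w, rowCond σ i A₀ w ≤ t)

open Classical in
noncomputable def safeKernel (σ : Mx → ℝ) (S : Finset (Fin m)) (t : ℝ) (i : Fin m) (A₀ : Mx)
    (w : Fin n → ZMod 2) : ℝ :=
  if IsSafeRow σ S t i A₀ then rowCond σ i A₀ w else 2 ^ (-(n : ℝ))

variable {σ : Matrix (Fin m) (Fin n) (ZMod 2) → ℝ} {S : Finset (Fin m)} {t : ℝ}

theorem safeKernel_nonneg (hσ : ∀ A, 0 ≤ σ A) (i : Fin m) (A₀ : Mx) (w : Fin n → ZMod 2) :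
    0 ≤ safeKernel σ S t i A₀ w := by
  unfold safeKernel
  split_ifs
  · exact rowCond_nonneg hσ i A₀ w
  · positivity

theorem sum_safeKernel (i : Fin m) (A₀ : Mx) : ∑ w, safeKernel σ S t i A₀ w = 1 := by
  unfold safeKernel
  split_ifs with hsafe
  · exact sum_rowCond σ hsafe.1.ne'
  · rw [sum_const, card_univ, Fintype.card_fun, ZMod.card, Fintype.card_fin, nsmul_eq_mul,
      Nat.cast_pow, Nat.cast_ofNat, Real.rpow_neg zero_le_two, Real.rpow_natCast,
      mul_inv_cancel₀ (by positivity)]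

theorem safeKernel_congr (i : Fin m) (A A' : Mx) (h : rowsAgree i A A') :
    safeKernel σ S t i A = safeKernel σ S t i A' := by
  unfold safeKernel IsSafeRow
  rw [rowCond_congr σ h, prEvt_congr σ (rowsAgree_congr_right h)]

theorem rowCond_chainProd_safeKernel_le (ht : 2 ^ (-(n : ℝ)) ≤ t) {A₀ : Mx}
    (hA₀ : chainProd (safeKernel σ S t) A₀ ≠ 0) {i : Fin m} (hi : i ∉ S) (w : Fin n → ZMod 2) :
    rowCond (chainProd (safeKernel σ S t)) i A₀ w ≤ t := by
  rw [rowCond_chainProd sum_safeKernel safeKernel_congr hA₀, safeKernel]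
  split_ifs with hsafe
  · exact hsafe.2.resolve_left hi w
  · exact ht

theorem chainProd_safeKernel_eq (hσ : ∀ A, 0 ≤ σ A) {A₀ : Mx} (hA₀ : 0 < σ A₀)
    (hsafe : ∀ i, IsSafeRow σ S t i A₀) : chainProd (safeKernel σ S t) A₀ = σ A₀ / ∑ A, σ A := by
  rw [← prod_rowCond_self hσ hA₀]
  exact prod_congr rfl fun i _ => if_pos (hsafe i)

variable {μ : Matrix (Fin m) (Fin n) (ZMod 2) → ℝ} {τ γ δ : ℝ}
  {B : Matrix (Fin m) (Fin n) (ZMod 2) → Option (Finset (Fin m))}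

theorem IsBadSetAssignment.pIdx_le (hB : IsBadSetAssignment μ τ γ B) (hμ : ∀ A, 0 ≤ μ A)
    {D : Mx} (hD : 0 < μ D) {S : Finset (Fin m)} (hBD : B D = some S) {i : Fin m} (hi : i ∉ S) :
    pIdx μ i D ≤ 2 ^ (-(n * (1 - √(τ + γ)))) := by
  have hrare : ¬ tauRare μ τ D := fun h => by simp [(hB D hD).1 h] at hBD
  obtain ⟨S', hBS', -, hq⟩ := (hB D hD).2 hrare
  obtain rfl : S = S' := Option.some_injective _ (hBD.symm.trans hBS')
  have hqi : (1 - √(τ + γ)) * n ≤ -Real.logb 2 (pIdx μ i D) := hq i hi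
  rcases (rowCond_nonneg hμ i D (D i)).eq_or_lt with h0 | hpos
  · rw [pIdx_eq_rowCond, ← h0]
    positivity
  · rw [pIdx_eq_rowCond, ← Real.logb_le_iff_le_rpow one_lt_two hpos, ← pIdx_eq_rowCond]
    linarith

theorem IsBadSetAssignment.card_getD_le (hB : IsBadSetAssignment μ τ γ B)
    {S₀ : Option (Finset (Fin m))} (hS₀ : 0 < prEvt μ (fun A => B A = S₀)) :
    ((S₀.getD ∅).card : ℝ) ≤ √(τ + γ) * m := by
  obtain ⟨A, rfl, hA⟩ := exists_pos_of_prEvt_pos hS₀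
  by_cases hrare : tauRare μ τ A
  · rw [(hB A hA).1 hrare, Option.getD_none, card_empty, Nat.cast_zero]
    positivity
  · obtain ⟨S, hS, hcard, -⟩ := (hB A hA).2 hrare
    rwa [hS, Option.getD_some]

theorem rowCond_restrictMass_le (hμ : ∀ A, 0 ≤ μ A) (hδ : 0 < δ) {E : Mx → Prop} {i : Fin m}
    {A₀ : Mx} (hpre : 0 < prEvt μ (fun C => rowsAgree i C A₀))
    (hE : δ ≤ prEvt μ (fun C => E C ∧ rowsAgree i C A₀) / prEvt μ (fun C => rowsAgree i C A₀))
    (w : Fin n → ZMod 2) : rowCond (restrictMass μ E) i A₀ w ≤ rowCond μ i A₀ w / δ := by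
  rw [le_div_iff₀ hpre] at hE
  rw [rowCond, rowCond, prEvt_restrictMass, prEvt_restrictMass, div_div]
  exact div_le_div₀ (prEvt_nonneg hμ _) (prEvt_mono hμ fun C => And.right)
    (mul_pos hpre hδ) (by linarith)

theorem isSafeRow_of_not_isTauDeltaBad (hB : IsBadSetAssignment μ τ γ B) (hμ : ∀ A, 0 ≤ μ A)
    (hδ : 0 < δ) {S₀ : Option (Finset (Fin m))} {A₀ : Mx} (hA₀ : 0 < μ A₀) (hBA₀ : B A₀ = S₀)
    (hgood : ¬ IsTauDeltaBad μ τ δ B A₀) (i : Fin m) :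
    IsSafeRow (restrictMass μ (fun A => B A = S₀)) (S₀.getD ∅)
      (2 ^ (-(n * (1 - √(τ + γ)))) / δ) i A₀ := by
  subst hBA₀
  set σ := restrictMass μ (fun A => B A = B A₀)
  have hσ : ∀ A, 0 ≤ σ A := restrictMass_nonneg hμ _
  obtain ⟨S, hS, -, -⟩ := (hB A₀ hA₀).2 fun h => hgood (Or.inl h)
  have hδi : δ ≤ prEvt μ (fun C => B C = B A₀ ∧ rowsAgree i C A₀)
      / prEvt μ (fun C => rowsAgree i C A₀) := not_lt.1 fun h => hgood (Or.inr ⟨i, h⟩)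
  refine ⟨prEvt_rowsAgree_pos hσ (restrictMass_pos_iff.2 ⟨rfl, hA₀⟩) i, ?_⟩
  rw [hS, Option.getD_some]
  refine or_iff_not_imp_left.2 fun hi w => ?_
  rcases (prEvt_nonneg hσ fun C => C i = w ∧ rowsAgree i C A₀).eq_or_lt with h0 | hpos
  · rw [rowCond, ← h0, zero_div]
    positivity
  obtain ⟨D, ⟨rfl, hD⟩, hσD⟩ := exists_pos_of_prEvt_pos hpos
  obtain ⟨hBD, hμD⟩ := restrictMass_pos_iff.1 hσD
  calc rowCond σ i A₀ (D i)
      ≤ rowCond μ i A₀ (D i) / δ :=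
        rowCond_restrictMass_le hμ hδ (prEvt_rowsAgree_pos hμ hA₀ i) hδi _
    _ = pIdx μ i D / δ := by rw [pIdx_eq_rowCond, rowCond_congr μ hD]
    _ ≤ _ := div_le_div_of_nonneg_right (hB.pIdx_le hμ hμD (hBD.trans hS) hi) hδ.le

theorem condDist_le_chainProd_safeKernel (hB : IsBadSetAssignment μ τ γ B) (hμ : ∀ A, 0 ≤ μ A)
    (hδ : 0 < δ) (S₀ : Option (Finset (Fin m))) {A : Mx} (hA : ¬ IsTauDeltaBad μ τ δ B A) :
    condDist μ B S₀ A ≤ chainProd (safeKernel (restrictMass μ (fun A => B A = S₀)) (S₀.getD ∅)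
      (2 ^ (-(n * (1 - √(τ + γ)))) / δ)) A := by
  have hσ := restrictMass_nonneg hμ (fun A => B A = S₀)
  simp only [condDist_eq_restrictMass_div]
  rcases (hσ A).eq_or_lt with h0 | hpos
  · rw [← h0, zero_div]
    exact chainProd_nonneg (safeKernel_nonneg hσ) A
  obtain ⟨hBA, hμA⟩ := restrictMass_pos_iff.1 hpos
  rw [chainProd_safeKernel_eq hσ hpos (isSafeRow_of_not_isTauDeltaBad hB hμ hδ hμA hBA hA),
    sum_restrictMass]

theorem half_sum_abs_sub_le_prEvt {p q : Mx → ℝ} (hp : ∀ A, 0 ≤ p A) (hq : ∀ A, 0 ≤ q A)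
    (hpq : ∑ A, p A = ∑ A, q A) {E : Mx → Prop} (hle : ∀ A, ¬ E A → p A ≤ q A) :
    1 / 2 * ∑ A, |p A - q A| ≤ prEvt p E := by
  classical
  have habs : ∀ x : ℝ, |x| = 2 * x⁺ - x := fun x => by
    linarith [posPart_add_negPart x, posPart_sub_negPart x]
  calc 1 / 2 * ∑ A, |p A - q A|
      = ∑ A, (p A - q A)⁺ - 1 / 2 * ∑ A, (p A - q A) := by
        simp only [habs, sum_sub_distrib, ← mul_sum]
        ring
    _ = ∑ A, (p A - q A)⁺ := by rw [sum_sub_distrib, hpq, sub_self, mul_zero, sub_zero]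
    _ ≤ prEvt p E := sum_le_sum fun A _ => ?_
  split_ifs with hE
  · exact sup_le (by linarith [hq A]) (hp A)
  · exact (posPart_eq_zero.2 (sub_nonpos.2 (hle A hE))).le

end

theorem cond_close_to_block_source_general (m n : ℕ)
    (μ : Matrix (Fin m) (Fin n) (ZMod 2) → ℝ)
    (hμ0 : ∀ A, 0 ≤ μ A)
    (γ τ δ : ℝ) (hδ0 : 0 < δ) (hδ1 : δ ≤ 1)
    (B : Matrix (Fin m) (Fin n) (ZMod 2) → Option (Finset (Fin m)))
    (hB : IsBadSetAssignment μ τ γ B)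
    (S₀ : Option (Finset (Fin m)))
    (hS₀ : 0 < prEvt μ (fun A => B A = S₀)) :
    ∃ ν : Matrix (Fin m) (Fin n) (ZMod 2) → ℝ,
      (∀ A, 0 ≤ ν A) ∧ (∑ A, ν A = 1) ∧
      IsBlockSource ν (Real.sqrt (τ + γ))
        ((n : ℝ) * (1 - Real.sqrt (τ + γ)) - Real.logb 2 (1 / δ)) ∧
      (1 / 2) * ∑ A, |condDist μ B S₀ A - ν A|
        ≤ prEvt μ (fun A => IsTauDeltaBad μ τ δ B A ∧ B A = S₀)
            / prEvt μ (fun A => B A = S₀) := by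
  set η := √(τ + γ)
  set σ := restrictMass μ (fun A => B A = S₀)
  set t : ℝ := 2 ^ (-(n * (1 - η))) / δ
  have hσ : ∀ A, 0 ≤ σ A := restrictMass_nonneg hμ0 _
  have hflat : (2 : ℝ) ^ (-(n : ℝ)) ≤ t :=
    (Real.rpow_le_rpow_of_exponent_le one_le_two (neg_le_neg (mul_le_of_le_one_right
      (Nat.cast_nonneg n) (sub_le_self 1 (Real.sqrt_nonneg _))))).trans
      (le_div_self (by positivity) hδ0 hδ1)
  have hν : ∀ A, 0 ≤ chainProd (safeKernel σ (S₀.getD ∅) t) A :=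
    chainProd_nonneg (safeKernel_nonneg hσ)
  have hν1 : ∑ A, chainProd (safeKernel σ (S₀.getD ∅) t) A = 1 :=
    sum_chainProd sum_safeKernel safeKernel_congr
  refine ⟨_, hν, hν1, ⟨_, hB.card_getD_le hS₀, fun A₀ hA₀ i hi w =>
    two_rpow_neg_sub_logb _ hδ0 ▸ rowCond_chainProd_safeKernel_le hflat hA₀.ne' hi w⟩, ?_⟩
  rw [← prEvt_condDist]
  exact half_sum_abs_sub_le_prEvt (condDist_nonneg hμ0 B S₀) hν
    ((sum_condDist μ hS₀.ne').trans hν1.symm) fun A hA =>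
    condDist_le_chainProd_safeKernel hB hμ0 hδ0 S₀ hA

/-- Conditioned on the value of the bad-set assignment, the random matrix is
`ε_bad(S₀)`-close to an `(η, n(1-η) - log₂(1/δ))`-block source, where `η = √(τ+γ)` and
`ε_bad(S₀)` is the conditional probability of being `(τ,δ)`-bad given `B(A) = S₀`. -/
theorem cond_close_to_block_source (m n : ℕ) (hm : 1 ≤ m) (hn : 1 ≤ n)
    (μ : Matrix (Fin m) (Fin n) (ZMod 2) → ℝ)
    (hμ0 : ∀ A, 0 ≤ μ A) (hμ1 : ∑ A, μ A = 1)
    (γ τ δ : ℝ) (hγ : 0 < γ) (hτ : 0 < τ) (hδ0 : 0 < δ) (hδ1 : δ ≤ 1)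
    (hη : Real.sqrt (τ + γ) ≤ 1)
    (B : Matrix (Fin m) (Fin n) (ZMod 2) → Option (Finset (Fin m)))
    (hB : IsBadSetAssignment μ τ γ B)
    (S₀ : Option (Finset (Fin m)))
    (hS₀ : 0 < prEvt μ (fun A => B A = S₀)) :
    ∃ ν : Matrix (Fin m) (Fin n) (ZMod 2) → ℝ,
      (∀ A, 0 ≤ ν A) ∧ (∑ A, ν A = 1) ∧
      IsBlockSource ν (Real.sqrt (τ + γ))
        ((n : ℝ) * (1 - Real.sqrt (τ + γ)) - Real.logb 2 (1 / δ)) ∧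
      (1 / 2) * ∑ A, |condDist μ B S₀ A - ν A|
        ≤ prEvt μ (fun A => IsTauDeltaBad μ τ δ B A ∧ B A = S₀)
            / prEvt μ (fun A => B A = S₀) :=
  cond_close_to_block_source_general m n μ hμ0 γ τ δ hδ0 hδ1 B hB S₀ hS₀
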